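/- arXiv:2102.09921 — 2 statements merged into one kernel-verified Lean document; each statement's English description precedes it below -/
import Mathlib

section
/- For all k ≥ 0, Σ_{i=0}^{k} 2^i · a_i = 2^{k+1} · c_{k+1} + Σ_{i=0}^{k} 2^i · b_i (all quantities read as integers). -/
/-- The carry sequence: `c i = ⋁_{1 ≤ j ≤ i} ((a j ∧ a (j-1)) ∧ ⋀_{j < k ≤ i} (a k ∨ a (k-1)))`. -/
noncomputable def carry (a : ℕ → Bool) (i : ℕ) : Bool :=
  (Finset.Icc 1 i).sup fun j =>
    (a j && a (j - 1)) && (Finset.Ioc j i).inf fun k => a k || a (k - 1)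

/-- The output digits: `b i = (a i ⊕ c i) · (−1)^{a (i+1)}`. -/
noncomputable def digit (a : ℕ → Bool) (i : ℕ) : ℤ :=
  ((Bool.xor (a i) (carry a i)).toNat : ℤ) * (-1) ^ (a (i + 1)).toNat

lemma carry_zero (a : ℕ → Bool) : carry a 0 = false := by simp [carry]

lemma carry_succ (a : ℕ → Bool) (i : ℕ) :
    carry a (i+1) = ((a (i+1) && a i) || (carry a i && (a (i+1) || a i))) := by
  unfold carry
  rw [show Finset.Icc 1 (i+1) = insert (i+1) (Finset.Icc 1 i) by
    ext x; simp [Finset.mem_Icc]; omega]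
  rw [Finset.sup_insert]
  have h1 : (Finset.Ioc (i+1) (i+1)) = ∅ := by simp
  rw [h1]
  simp only [Finset.inf_empty]
  have h2 : ((Finset.Icc 1 i).sup fun j =>
      (a j && a (j - 1)) && (Finset.Ioc j (i+1)).inf fun k => a k || a (k - 1))
      = ((Finset.Icc 1 i).sup fun j =>
      ((a j && a (j - 1)) && (Finset.Ioc j i).inf fun k => a k || a (k - 1)) ⊓ (a (i+1) || a i)) := by
    apply Finset.sup_congr rfl
    intro j hj
    simp only [Finset.mem_Icc] at hj
    rw [show Finset.Ioc j (i+1) = insert (i+1) (Finset.Ioc j i) by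
      ext x; simp [Finset.mem_Ioc]; omega]
    rw [Finset.inf_insert]
    show (_ && ((_ || _) && _)) = ((_ && _) && (_ || _))
    simp only [Nat.add_sub_cancel]
    simp only [Bool.and_assoc]
    ac_rfl
  rw [h2, ← Finset.sup_inf_distrib_right]
  simp only [Nat.add_sub_cancel]
  show ((((a (i+1) && a i) && true) || _) = _)
  rw [Bool.and_true]
  rfl

lemma step (a : ℕ → Bool) (i : ℕ) :
    ((a i).toNat : ℤ) + ((carry a i).toNat : ℤ)
      = 2 * ((carry a (i+1)).toNat : ℤ) + digit a i := by
  rw [digit, carry_succ a i]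
  cases h1 : a i <;> cases h2 : a (i+1) <;> cases h3 : carry a i <;>
    simp [h1, h2, h3]

/-- For all `k ≥ 0`:
`Σ_{i=0}^{k} 2^i·a i = 2^{k+1}·c (k+1) + Σ_{i=0}^{k} 2^i·b i` (read as integers). -/
theorem partial_sums_identity (m : ℕ) (a : ℕ → Bool) (ha : ∀ i, m ≤ i → a i = false) :
    ∀ k : ℕ,
      ∑ i ∈ Finset.range (k + 1), (2 : ℤ) ^ i * ((a i).toNat : ℤ)
        = 2 ^ (k + 1) * ((carry a (k + 1)).toNat : ℤ)
          + ∑ i ∈ Finset.range (k + 1), (2 : ℤ) ^ i * digit a i := by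
  intro k
  induction k with
  | zero =>
    have h := step a 0
    rw [carry_zero a] at h
    simp only [Bool.toNat_false, Nat.cast_zero, add_zero] at h
    simp only [zero_add, Finset.sum_range_one, pow_zero, one_mul, pow_one]
    linarith
  | succ k ih =>
    rw [Finset.sum_range_succ, Finset.sum_range_succ (f := fun i => (2:ℤ)^i * digit a i), ih]
    have h := step a (k+1)
    linear_combination (2:ℤ)^(k+1) * h
end

section
/- Let r, s ∈ ℤ[1/2], m, n ∈ ℤ, q ∈ ℤ, and let x ∈ H with b⁻¹·x·b = ι(q,0). Then the element w = b·ι(r,m)·b⁻¹·x·b·ι(s,n)·b⁻¹ of H lies in the image of ι if and only if r + 2^m·(q + s) ∈ ℤ and m + n = 0; and in that case w = ι(0, r + 2^m·(q + s)). -/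
/-- The dyadic rationals `ℤ[1/2] = {p/2^q : p,q ∈ ℤ}`. -/
def IsDyadic (x : ℚ) : Prop := ∃ p : ℤ, ∃ q : ℕ, x = p / 2 ^ q

theorem IsDyadic.add {x y : ℚ} (hx : IsDyadic x) (hy : IsDyadic y) :
    IsDyadic (x + y) := by
  obtain ⟨p, q, rfl⟩ := hx
  obtain ⟨p', q', rfl⟩ := hy
  refine ⟨p * 2 ^ q' + p' * 2 ^ q, q + q', ?_⟩
  have h2 : (2 : ℚ) ≠ 0 := two_ne_zero
  push_cast
  rw [pow_add]
  field_simp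

theorem IsDyadic.neg {x : ℚ} (hx : IsDyadic x) : IsDyadic (-x) := by
  obtain ⟨p, q, rfl⟩ := hx
  exact ⟨-p, q, by push_cast; ring⟩

theorem IsDyadic.zpow_mul (m : ℤ) {x : ℚ} (hx : IsDyadic x) :
    IsDyadic ((2 : ℚ) ^ m * x) := by
  obtain ⟨p, q, rfl⟩ := hx
  have h2 : (2 : ℚ) ≠ 0 := two_ne_zero
  rcases Int.eq_nat_or_neg m with ⟨a, rfl | rfl⟩
  · refine ⟨p * 2 ^ a, q, ?_⟩
    rw [zpow_natCast]
    push_cast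
    field_simp
  · refine ⟨p, q + a, ?_⟩
    rw [zpow_neg, zpow_natCast, pow_add]
    field_simp

/-- The underlying set of `ℤ[1/2]`. -/
abbrev Dy : Type := {x : ℚ // IsDyadic x}

/-- The carrier `ℤ[1/2] × ℤ` of the Baumslag–Solitar group `BS(1,2) = ℤ[1/2] ⋊ ℤ`. -/
def BS12 : Type := Dy × ℤ

/-- The group structure of the semidirect product `ℤ[1/2] ⋊ ℤ`, where `n ∈ ℤ` acts on
`ℤ[1/2]` by `x ↦ 2^n·x`: multiplication `(r,m)·(s,n) = (r + 2^m·s, m+n)`. -/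
instance : Group BS12 where
  mul g h := (⟨g.1.1 + 2 ^ g.2 * h.1.1, g.1.2.add (IsDyadic.zpow_mul g.2 h.1.2)⟩,
    g.2 + h.2)
  one := (⟨0, 0, 0, by norm_num⟩, 0)
  inv g := (⟨-((2 : ℚ) ^ (-g.2) * g.1.1), (IsDyadic.zpow_mul (-g.2) g.1.2).neg⟩, -g.2)
  mul_assoc g h k := by
    show Prod.mk _ _ = Prod.mk _ _
    have h2 : (2 : ℚ) ≠ 0 := two_ne_zero
    refine Prod.ext ?_ ?_
    · apply Subtype.ext
      show (g.1.1 + 2 ^ g.2 * h.1.1) + 2 ^ (g.2 + h.2) * k.1.1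
        = g.1.1 + 2 ^ g.2 * (h.1.1 + 2 ^ h.2 * k.1.1)
      rw [zpow_add₀ h2]
      ring
    · show g.2 + h.2 + k.2 = g.2 + (h.2 + k.2)
      ring
  one_mul g := by
    show Prod.mk _ _ = g
    refine Prod.ext ?_ ?_
    · apply Subtype.ext
      show (0 : ℚ) + 2 ^ (0 : ℤ) * g.1.1 = g.1.1
      simp
    · show (0 : ℤ) + g.2 = g.2
      simp
  mul_one g := by
    show Prod.mk _ _ = g
    refine Prod.ext ?_ ?_
    · apply Subtype.ext
      show g.1.1 + 2 ^ g.2 * (0 : ℚ) = g.1.1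
      simp
    · show g.2 + (0 : ℤ) = g.2
      simp
  inv_mul_cancel g := by
    show Prod.mk _ _ = Prod.mk _ _
    refine Prod.ext ?_ ?_
    · apply Subtype.ext
      show -((2 : ℚ) ^ (-g.2) * g.1.1) + 2 ^ (-g.2) * g.1.1 = 0
      ring
    · show -g.2 + g.2 = 0
      ring

/-- The element `(r, m)` of `ℤ[1/2] ⋊ ℤ`. -/
def BS12.mk (r : Dy) (m : ℤ) : BS12 := (r, m)

/-- `0 ∈ ℤ[1/2]`. -/
def Dy.zero : Dy := ⟨0, 0, 0, by norm_num⟩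

/-- An integer, viewed as an element of `ℤ[1/2]`. -/
def Dy.ofInt (z : ℤ) : Dy := ⟨(z : ℚ), z, 0, by norm_num⟩

/-- The subgroup `A = {(q,0) : q ∈ ℤ}` of `ℤ[1/2] ⋊ ℤ`. -/
def subA : Subgroup BS12 where
  carrier := {g | (∃ z : ℤ, g.1.1 = (z : ℚ)) ∧ g.2 = 0}
  one_mem' := ⟨⟨0, show (0 : ℚ) = ((0 : ℤ) : ℚ) by norm_num⟩, rfl⟩
  mul_mem' := by
    rintro g h ⟨⟨z1, hz1⟩, hg2⟩ ⟨⟨z2, hz2⟩, hh2⟩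
    constructor
    · refine ⟨z1 + z2, ?_⟩
      show g.1.1 + 2 ^ g.2 * h.1.1 = ((z1 + z2 : ℤ) : ℚ)
      rw [hz1, hz2, hg2, zpow_zero]
      push_cast
      ring
    · show g.2 + h.2 = 0
      rw [hg2, hh2]
      ring
  inv_mem' := by
    rintro g ⟨⟨z, hz⟩, hg2⟩
    constructor
    · refine ⟨-z, ?_⟩
      show -((2 : ℚ) ^ (-g.2) * g.1.1) = ((-z : ℤ) : ℚ)
      rw [hz, hg2]
      push_cast
      ring
    · show -g.2 = 0
      rw [hg2]
      ring

/-- The subgroup `B = {(0,k) : k ∈ ℤ}` of `ℤ[1/2] ⋊ ℤ`. -/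
def subB : Subgroup BS12 where
  carrier := {g | g.1.1 = 0}
  one_mem' := show (0 : ℚ) = 0 from rfl
  mul_mem' := by
    intro g h hg hh
    show g.1.1 + 2 ^ g.2 * h.1.1 = 0
    rw [hg, hh]
    ring
  inv_mem' := by
    intro g hg
    show -((2 : ℚ) ^ (-g.2) * g.1.1) = 0
    rw [hg]
    ring

/-- The isomorphism `φ : A → B`, `(q,0) ↦ (0,q)`. -/
def phiAB : subA ≃* subB where
  toFun g := ⟨(Dy.zero, g.1.1.1.num), rfl⟩
  invFun g := ⟨(Dy.ofInt g.1.2, 0), ⟨⟨g.1.2, rfl⟩, rfl⟩⟩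
  left_inv g := by
    obtain ⟨⟨z, hz⟩, hg2⟩ := g.2
    apply Subtype.ext
    refine Prod.ext ?_ ?_
    · apply Subtype.ext
      show ((g.1.1.1.num : ℤ) : ℚ) = g.1.1.1
      rw [hz, Rat.num_intCast]
    · exact hg2.symm
  right_inv g := by
    have hg : g.1.1.1 = 0 := g.2
    apply Subtype.ext
    refine Prod.ext ?_ ?_
    · apply Subtype.ext
      show (0 : ℚ) = g.1.1.1
      exact hg.symm
    · show (Dy.ofInt g.1.2).1.num = g.1.2
      show ((g.1.2 : ℤ) : ℚ).num = g.1.2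
      rw [Rat.num_intCast]
  map_mul' g h := by
    obtain ⟨⟨z1, hz1⟩, hg2⟩ := g.2
    obtain ⟨⟨z2, hz2⟩, hh2⟩ := h.2
    apply Subtype.ext
    refine Prod.ext ?_ ?_
    · apply Subtype.ext
      show (0 : ℚ) = (0 : ℚ) + 2 ^ ((g.1.1.1.num : ℤ)) * 0
      ring
    · show (g.1.1.1 + 2 ^ g.1.2 * h.1.1.1).num = g.1.1.1.num + h.1.1.1.num
      rw [hz1, hz2, hg2, zpow_zero, one_mul, ← Int.cast_add, Rat.num_intCast,
        Rat.num_intCast, Rat.num_intCast]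

/-- The Baumslag group as the HNN extension `H = HNN(G, A, B, φ)` of
`G = ℤ[1/2] ⋊ ℤ`, with stable letter `b` satisfying `b·g·b⁻¹ = φ(g)` for `g ∈ A`. -/
abbrev BaumslagH : Type := HNNExtension BS12 subA subB phiAB

/-- The stable letter `b` of the HNN extension. -/
def bH : BaumslagH := HNNExtension.t

/-- The canonical embedding `ι : G → H` of the base group. -/
def iH : BS12 →* BaumslagH := HNNExtension.of

/-!
Since `b⁻¹·x·b = ι(q,0)`, the element `w` equals `b·ι(g₀)·b⁻¹` with
`g₀ = (r,m)·(q,0)·(s,n) = (r + 2^m·(q+s), m+n)`. By Britton's lemma, `b·ι(g)·b⁻¹` lies in the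
base group exactly when `g ∈ A`, and then it equals `ι(φ g)`.
-/

namespace HNNExtension

variable {G : Type*} [Group G] {A B : Subgroup G} {φ : A ≃* B}

theorem t_mul_of_mul_t_inv_mem_range_iff {g : G} :
    t * of g * t⁻¹ ∈ (of.range : Subgroup (HNNExtension G A B φ)) ↔ g ∈ A := by
  refine ⟨fun hmem => ?_, fun hg => ⟨_, equiv_eq_conj ⟨g, hg⟩⟩⟩
  by_contra hgA
  -- `t·g·t⁻¹` is a reduced word exactly because `g ∉ A`
  let w : NormalWord.ReducedWord G A B :=
    { head := 1
      toList := [(1, g), (-1, 1)]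
      chain := List.isChain_cons_cons.2 ⟨fun hA => absurd hA hgA, List.isChain_singleton _⟩ }
  have hprod : w.prod φ = t * of g * t⁻¹ := by
    simp [NormalWord.ReducedWord.prod, w, mul_assoc]
  have hnil := ReducedWord.toList_eq_nil_of_mem_of_range φ w (hprod ▸ hmem)
  simp [w] at hnil

end HNNExtension

namespace BS12

theorem coe_mul_fst (g h : BS12) : ((g * h).1 : ℚ) = g.1 + 2 ^ g.2 * h.1 := rfl

theorem mul_snd (g h : BS12) : (g * h).2 = g.2 + h.2 := rfl

theorem mem_subA_iff {g : BS12} : g ∈ subA ↔ (∃ z : ℤ, (g.1 : ℚ) = z) ∧ g.2 = 0 := Iff.rfl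

theorem coe_phiAB_of_coe_eq_intCast (a : subA) {z : ℤ} (hz : (a.1.1 : ℚ) = z) :
    (phiAB a : BS12) = mk Dy.zero z := by
  show (Dy.zero, (a.1.1 : ℚ).num) = (Dy.zero, z)
  rw [hz, Rat.num_intCast]

theorem coe_mk_mul_ofInt_mul_mk_fst (r s : Dy) (m n q : ℤ) :
    ((mk r m * mk (Dy.ofInt q) 0 * mk s n).1 : ℚ) = r + 2 ^ m * (q + s) := by
  rw [coe_mul_fst, coe_mul_fst]
  show (r : ℚ) + 2 ^ m * q + 2 ^ (m + 0) * s = r + 2 ^ m * (q + s)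
  rw [add_zero]
  ring

theorem mk_mul_ofInt_mul_mk_snd (r s : Dy) (m n q : ℤ) :
    (mk r m * mk (Dy.ofInt q) 0 * mk s n).2 = m + n := by
  rw [mul_snd, mul_snd]
  exact congrArg (· + n) (add_zero m)

theorem mk_mul_ofInt_mul_mk_mem_subA_iff (r s : Dy) (m n q : ℤ) :
    mk r m * mk (Dy.ofInt q) 0 * mk s n ∈ subA ↔
      (∃ z : ℤ, (r : ℚ) + 2 ^ m * ((q : ℚ) + (s : ℚ)) = z) ∧ m + n = 0 := by
  rw [mem_subA_iff, coe_mk_mul_ofInt_mul_mk_fst, mk_mul_ofInt_mul_mk_snd]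

end BS12

/-- Let `r, s ∈ ℤ[1/2]`, `m, n ∈ ℤ`, `q ∈ ℤ`, and `x ∈ H` with
`b⁻¹·x·b = ι(q,0)`.  Then `w = b·ι(r,m)·b⁻¹·x·b·ι(s,n)·b⁻¹` lies in the image of `ι`
iff `r + 2^m·(q + s) ∈ ℤ` and `m + n = 0`; and in that case
`w = ι(0, r + 2^m·(q + s))`. -/
theorem britton_case_b_binv (r s : Dy) (m n : ℤ) (q : ℤ) (x : BaumslagH)
    (hx : bH⁻¹ * x * bH = iH (BS12.mk (Dy.ofInt q) 0)) :
    ((∃ g : BS12,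
        bH * iH (BS12.mk r m) * bH⁻¹ * x * bH * iH (BS12.mk s n) * bH⁻¹ = iH g)
      ↔ ((∃ z : ℤ, (r : ℚ) + 2 ^ m * ((q : ℚ) + (s : ℚ)) = (z : ℚ)) ∧ m + n = 0))
    ∧ ∀ z : ℤ, ((z : ℚ) = (r : ℚ) + 2 ^ m * ((q : ℚ) + (s : ℚ))) →
        ((∃ z' : ℤ, (r : ℚ) + 2 ^ m * ((q : ℚ) + (s : ℚ)) = (z' : ℚ)) ∧ m + n = 0) →
        bH * iH (BS12.mk r m) * bH⁻¹ * x * bH * iH (BS12.mk s n) * bH⁻¹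
          = iH (BS12.mk Dy.zero z) := by
  set g₀ := BS12.mk r m * BS12.mk (Dy.ofInt q) 0 * BS12.mk s n
  have hw : bH * iH (BS12.mk r m) * bH⁻¹ * x * bH * iH (BS12.mk s n) * bH⁻¹
      = bH * iH g₀ * bH⁻¹ :=
    calc _ = bH * (iH (BS12.mk r m) * (bH⁻¹ * x * bH) * iH (BS12.mk s n)) * bH⁻¹ := by group
      _ = bH * iH g₀ * bH⁻¹ := by rw [hx, ← map_mul, ← map_mul]
  have hg₀ := BS12.mk_mul_ofInt_mul_mk_mem_subA_iff r s m n q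
  rw [hw]
  refine ⟨?_, fun z hz hcond => ?_⟩
  · rw [← hg₀, ← HNNExtension.t_mul_of_mul_t_inv_mem_range_iff]
    exact exists_congr fun _ => eq_comm
  · have hA : g₀ ∈ subA := hg₀.2 hcond
    rw [← BS12.coe_phiAB_of_coe_eq_intCast ⟨g₀, hA⟩
      ((BS12.coe_mk_mul_ofInt_mul_mk_fst r s m n q).trans hz.symm)]
    exact (HNNExtension.equiv_eq_conj (φ := phiAB) ⟨g₀, hA⟩).symm
end
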